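/- arXiv:1802.07090 — 3 statements merged into one kernel-verified Lean document; each statement's English description precedes it below -/
import Mathlib

section
/- Let k and r be positive integers with r ≤ k. If a tournament T contains a set of r pairwise arc-disjoint cycles, then T contains a set of r pairwise arc-disjoint cycles each of length at most 2k+1. -/
variable {V : Type*}

/-- A directed cycle in the digraph with arc relation `A`: a nonempty duplicate-free
list of at least two vertices such that every cyclically-consecutive pair is an arc. -/
structure DCycle (A : V → V → Prop) where
  verts : List V
  two_le : 2 ≤ verts.length
  nodup : verts.Nodup
  arcs_rel : ∀ p ∈ verts.zip (verts.rotate 1), A p.1 p.2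

/-- The set of arcs of a cycle (cyclically consecutive pairs of its vertex list). -/
def DCycle.arcs {A : V → V → Prop} (c : DCycle A) : Set (V × V) :=
  {p | p ∈ c.verts.zip (c.verts.rotate 1)}

/-- Two cycles are arc-disjoint if they share no arc. -/
def ArcDisjoint {A : V → V → Prop} (c₁ c₂ : DCycle A) : Prop :=
  Disjoint c₁.arcs c₂.arcs

/-- A tournament: irreflexive, and between any two distinct vertices exactly one arc. -/
def IsTournament (A : V → V → Prop) : Prop :=
  (∀ v, ¬ A v v) ∧ ∀ u v : V, u ≠ v → (A u v ↔ ¬ A v u)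

/-- `F` is a feedback arc set of the digraph with arc relation `A`. -/
def IsFAS (A : V → V → Prop) (F : Set (V × V)) : Prop :=
  (∀ p ∈ F, A p.1 p.2) ∧ IsEmpty (DCycle (fun u v => A u v ∧ (u, v) ∉ F))

/-!
Among all families of pairwise arc-disjoint cycles indexed by `ι`, take one of minimal total
length. If the tournament arc `u → v` joins two vertices of a cycle `C` of the family but lies on
no cycle of the family, then the path of `C` from `v` to `u` closed by `u → v` is a shorter cycle
that may replace `C`. Hence, for a longest cycle `C` of length `M`, all `M(M-1)/2` tournament arcs
among its vertices lie on the family, which carries at most `|ι| M` arcs, so `M ≤ 2|ι| + 1`.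
-/

namespace List

variable {α : Type*}

theorem mem_zip_rotate_one_iff {l : List α} {p : α × α} :
    p ∈ l.zip (l.rotate 1) ↔
      ∃ (i : ℕ) (h : i < l.length),
        p = (l[i], l[(i + 1) % l.length]'(Nat.mod_lt _ (by omega))) := by
  rw [List.mem_iff_getElem]
  constructor
  · rintro ⟨i, hi, rfl⟩
    exact ⟨i, by simpa using hi, by simp [List.getElem_rotate]⟩
  · rintro ⟨i, hi, rfl⟩
    exact ⟨i, by simpa using hi, by simp [List.getElem_rotate]⟩

theorem mem_zip_rotate_one_rotate {l : List α} {k : ℕ} {p : α × α} :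
    p ∈ (l.rotate k).zip ((l.rotate k).rotate 1) ↔ p ∈ l.zip (l.rotate 1) := by
  rw [List.rotate_rotate, add_comm, ← List.rotate_rotate, List.zip,
    ← List.zipWith_rotate_distrib _ _ _ _ (by simp), List.mem_rotate]

theorem mem_zip_take_rotate_one {l : List α} {s : ℕ} (hs : 0 < s) (hsl : s ≤ l.length)
    {p : α × α} (hp : p ∈ (l.take s).zip ((l.take s).rotate 1)) :
    p = (l[s - 1], l[0]) ∨ p ∈ l.zip (l.rotate 1) := by
  rw [mem_zip_rotate_one_iff] at hp ⊢
  obtain ⟨i, hi, rfl⟩ := hp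
  simp only [List.length_take, Nat.min_eq_left hsl] at hi ⊢
  rcases Nat.lt_or_ge (i + 1) s with h | h
  · right
    refine ⟨i, by omega, ?_⟩
    simp [Nat.mod_eq_of_lt h, Nat.mod_eq_of_lt (show i + 1 < l.length by omega)]
  · left
    obtain rfl : i = s - 1 := by omega
    simp [Nat.sub_add_cancel hs]

end List

namespace DCycle

variable {A : V → V → Prop}

def rotate (c : DCycle A) (k : ℕ) : DCycle A where
  verts := c.verts.rotate k
  two_le := by simpa using c.two_le
  nodup := List.nodup_rotate.2 c.nodup
  arcs_rel p hp := c.arcs_rel p (List.mem_zip_rotate_one_rotate.1 hp)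

@[simp]
theorem length_rotate (c : DCycle A) (k : ℕ) : (c.rotate k).verts.length = c.verts.length :=
  List.length_rotate ..

@[simp]
theorem arcs_rotate (c : DCycle A) (k : ℕ) : (c.rotate k).arcs = c.arcs :=
  Set.ext fun _ => List.mem_zip_rotate_one_rotate

theorem exists_shortcut_to_head (c : DCycle A) {d : ℕ} (hd : d < c.verts.length) (hd0 : d ≠ 0)
    (hA : A c.verts[d] (c.verts[0]'(by omega)))
    (hnot : (c.verts[d], c.verts[0]'(by omega)) ∉ c.arcs) :
    ∃ D : DCycle A, D.verts.length < c.verts.length ∧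
      D.arcs ⊆ insert (c.verts[d], c.verts[0]'(by omega)) c.arcs := by
  -- The shortcut is `c.verts[0..d]` closed by the chord; `hnot` says `d` is not the last index.
  have hdn : d + 1 < c.verts.length := by
    by_contra! h
    obtain rfl : d = c.verts.length - 1 := by omega
    refine hnot (List.mem_zip_rotate_one_iff.2 ⟨c.verts.length - 1, hd, ?_⟩)
    simp [Nat.sub_add_cancel (show 1 ≤ c.verts.length by omega)]
  refine ⟨⟨c.verts.take (d + 1), by simp; omega, c.nodup.sublist (List.take_sublist ..),
    fun p hp => ?_⟩, by simpa using hdn, fun p hp => ?_⟩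
  · rcases List.mem_zip_take_rotate_one (by omega) (by omega) hp with rfl | h
    · simpa using hA
    · exact c.arcs_rel p h
  · rcases List.mem_zip_take_rotate_one (by omega) (by omega) hp with rfl | h
    · exact Or.inl (by simp)
    · exact Or.inr h

theorem exists_shortcut (c : DCycle A) {u v : V} (hu : u ∈ c.verts) (hv : v ∈ c.verts)
    (huv : u ≠ v) (hA : A u v) (hnot : (u, v) ∉ c.arcs) :
    ∃ D : DCycle A, D.verts.length < c.verts.length ∧ D.arcs ⊆ insert (u, v) c.arcs := by
  obtain ⟨j, hj, rfl⟩ := List.getElem_of_mem hv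
  have hhead : (c.rotate j).verts[0]'(by simp; omega) = c.verts[j] := by
    simp [rotate, List.getElem_rotate, Nat.mod_eq_of_lt hj]
  obtain ⟨d, hd, rfl⟩ := List.getElem_of_mem (List.mem_rotate.2 hu : u ∈ (c.rotate j).verts)
  rw [← hhead] at hA hnot huv ⊢
  rw [← arcs_rotate c j] at hnot ⊢
  obtain ⟨D, hlt, hsub⟩ :=
    (c.rotate j).exists_shortcut_to_head hd (by rintro rfl; exact huv rfl) hA hnot
  exact ⟨D, hlt.trans_eq (length_rotate c j), hsub⟩

section Finset

variable [DecidableEq V]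

def arcFinset (c : DCycle A) : Finset (V × V) :=
  (c.verts.zip (c.verts.rotate 1)).toFinset

@[simp]
theorem mem_arcFinset {c : DCycle A} {p : V × V} : p ∈ c.arcFinset ↔ p ∈ c.arcs :=
  List.mem_toFinset

theorem card_arcFinset_le (c : DCycle A) : c.arcFinset.card ≤ c.verts.length :=
  (List.toFinset_card_le _).trans (by simp)

end Finset

end DCycle

theorem ArcDisjoint.symm {A : V → V → Prop} {c₁ c₂ : DCycle A} (h : ArcDisjoint c₁ c₂) :
    ArcDisjoint c₂ c₁ :=
  Disjoint.symm h

open Finset in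
theorem IsTournament.card_mul_pred_le [DecidableEq V] {A : V → V → Prop} (hT : IsTournament A)
    {S : Finset V} {T : Finset (V × V)} (hST : ∀ u ∈ S, ∀ v ∈ S, A u v → (u, v) ∈ T) :
    #S * (#S - 1) ≤ 2 * #T := by
  classical
  -- Each pair of distinct vertices is an arc in exactly one direction, so `Prod.swap` matches
  -- the non-arcs of `S.offDiag` with its arcs.
  have hswap : #{p ∈ S.offDiag | ¬ A p.1 p.2} = #{p ∈ S.offDiag | A p.1 p.2} := by
    refine card_nbij' Prod.swap Prod.swap (fun p hp => ?_) (fun p hp => ?_) (fun _ _ => rfl)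
      (fun _ _ => rfl)
    · simp only [coe_filter, mem_offDiag, Set.mem_ofPred_eq, Prod.fst_swap, Prod.snd_swap] at hp ⊢
      exact ⟨⟨hp.1.2.1, hp.1.1, hp.1.2.2.symm⟩, not_not.1 ((hT.2 _ _ hp.1.2.2).not.1 hp.2)⟩
    · simp only [coe_filter, mem_offDiag, Set.mem_ofPred_eq, Prod.fst_swap, Prod.snd_swap] at hp ⊢
      exact ⟨⟨hp.1.2.1, hp.1.1, hp.1.2.2.symm⟩, (hT.2 _ _ hp.1.2.2).1 hp.2⟩
  have harcs : #{p ∈ S.offDiag | A p.1 p.2} ≤ #T :=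
    card_le_card fun p hp => by
      simp only [mem_filter, mem_offDiag] at hp
      exact hST _ hp.1.1 _ hp.1.2.1 hp.2
  have hsplit := card_filter_add_card_filter_not (s := S.offDiag) (fun p => A p.1 p.2)
  rw [offDiag_card, hswap] at hsplit
  rw [Nat.mul_sub_one]
  omega

section Family

open Finset Function

variable {A : V → V → Prop} {ι : Type*} [Fintype ι]

def totalLength (f : ι → DCycle A) : ℕ :=
  ∑ i, (f i).verts.length

theorem exists_mem_arcs_of_totalLength_minimal (hirr : ∀ v, ¬ A v v)
    {f : ι → DCycle A} (hf : Pairwise (ArcDisjoint on f))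
    (hmin : ∀ g : ι → DCycle A, Pairwise (ArcDisjoint on g) → totalLength f ≤ totalLength g)
    {i : ι} {u v : V} (hu : u ∈ (f i).verts) (hv : v ∈ (f i).verts) (huv : A u v) :
    ∃ j, (u, v) ∈ (f j).arcs := by
  classical
  by_contra! hfree
  obtain ⟨D, hlt, hsub⟩ :=
    (f i).exists_shortcut hu hv (fun h => hirr u (h ▸ huv)) huv (hfree i)
  have hD : ∀ j, j ≠ i → ArcDisjoint D (f j) := fun j hj =>
    Set.disjoint_left.2 fun p hpD hpj => by
      rcases hsub hpD with rfl | hpi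
      · exact hfree j hpj
      · exact Set.disjoint_left.1 (hf hj.symm) hpi hpj
  have hg : Pairwise (ArcDisjoint on update f i D) := by
    intro a b hab
    rcases eq_or_ne a i with rfl | ha
    · simpa [onFun, hab.symm] using hD b hab.symm
    rcases eq_or_ne b i with rfl | hb
    · simpa [onFun, ha] using (hD a ha).symm
    · simpa [onFun, ha, hb] using hf hab
  have hshorter : totalLength (update f i D) < totalLength f := by
    refine sum_lt_sum (fun j _ => ?_) ⟨i, mem_univ i, by simpa using hlt⟩
    rcases eq_or_ne j i with rfl | hj
    · simpa using hlt.le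
    · simp [hj]
  exact (hmin _ hg).not_gt hshorter

theorem exists_pairwise_arcDisjoint_length_le (hT : IsTournament A) {c : ι → DCycle A}
    (hc : Pairwise (ArcDisjoint on c)) :
    ∃ c' : ι → DCycle A, Pairwise (ArcDisjoint on c') ∧
      ∀ i, (c' i).verts.length ≤ 2 * Fintype.card ι + 1 := by
  classical
  obtain ⟨f, hf, hmin⟩ := (InvImage.wf (totalLength (A := A) (ι := ι)) wellFounded_lt).has_min
    {g | Pairwise (ArcDisjoint on g)} ⟨c, hc⟩
  refine ⟨f, hf, fun i => ?_⟩
  have : Nonempty ι := ⟨i⟩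
  obtain ⟨i₀, hmax⟩ := Finite.exists_max fun j => (f j).verts.length
  set M := (f i₀).verts.length
  have hcount : M * (M - 1) ≤ M * (2 * Fintype.card ι) := calc
    M * (M - 1) = #(f i₀).verts.toFinset * (#(f i₀).verts.toFinset - 1) := by
      rw [List.toFinset_card_of_nodup (f i₀).nodup]
    _ ≤ 2 * #(univ.biUnion fun j => (f j).arcFinset) := hT.card_mul_pred_le fun u hu v hv huv => by
      obtain ⟨j, hj⟩ := exists_mem_arcs_of_totalLength_minimal hT.1 hf
        (fun g hg => not_lt.1 (hmin g hg)) (List.mem_toFinset.1 hu) (List.mem_toFinset.1 hv) huv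
      exact mem_biUnion.2 ⟨j, mem_univ j, DCycle.mem_arcFinset.2 hj⟩
    _ ≤ 2 * ∑ j, #(f j).arcFinset := by gcongr; exact card_biUnion_le
    _ ≤ 2 * ∑ _j : ι, M := by gcongr with j; exact (f j).card_arcFinset_le.trans (hmax j)
    _ = M * (2 * Fintype.card ι) := by simp [card_univ]; ring
  have hM : M - 1 ≤ 2 * Fintype.card ι :=
    Nat.le_of_mul_le_mul_left hcount (by have := (f i₀).two_le; omega)
  have := hmax i
  omega

end Family

theorem stmt1_general (A : V → V → Prop) (hT : IsTournament A)
    (k r : ℕ) (hrk : r ≤ k)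
    (c : Fin r → DCycle A) (hdisj : ∀ i j, i ≠ j → ArcDisjoint (c i) (c j)) :
    ∃ c' : Fin r → DCycle A, (∀ i j, i ≠ j → ArcDisjoint (c' i) (c' j)) ∧
      ∀ i, (c' i).verts.length ≤ 2 * k + 1 := by
  obtain ⟨c', hc', hlen⟩ := exists_pairwise_arcDisjoint_length_le hT hdisj
  refine ⟨c', hc', fun i => (hlen i).trans ?_⟩
  rw [Fintype.card_fin]
  omega

/-- If a tournament contains `r ≤ k` arc-disjoint cycles, then it contains `r`
arc-disjoint cycles each of length at most `2k+1`. -/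
theorem stmt1 [Fintype V] (A : V → V → Prop) (hT : IsTournament A)
    (k r : ℕ) (hk : 0 < k) (hr : 0 < r) (hrk : r ≤ k)
    (c : Fin r → DCycle A) (hdisj : ∀ i j, i ≠ j → ArcDisjoint (c i) (c j)) :
    ∃ c' : Fin r → DCycle A, (∀ i j, i ≠ j → ArcDisjoint (c' i) (c' j)) ∧
      ∀ i, (c' i).verts.length ≤ 2 * k + 1 :=
  stmt1_general A hT k r hrk c hdisj
end

section
/- Let D be a triangle-free simple digraph, let u be a vertex of D, let I = N⁻(u), O = N⁺(u), and R the set of vertices distinct from u that are non-adjacent to u. If F₁ is a feedback arc set of D[I ∪ R], F₂ is a feedback arc set of D[O], and E is the set of arcs (x,y) with x ∈ O and y ∈ R, then F₁ ∪ F₂ ∪ E is a feedback arc set of D. -/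
variable {V : Type*}

/-- For a triangle-free simple digraph `D` and a vertex `u` with in-neighborhood `I`,
out-neighborhood `O` and non-neighborhood `R`: the union of a feedback arc set of
`D[I ∪ R]`, a feedback arc set of `D[O]`, and the set `E` of arcs from `O` to `R`,
is a feedback arc set of `D`. -/
theorem stmt6 [Fintype V] (A : V → V → Prop)
    (hirr : ∀ v, ¬ A v v) (hsimple : ∀ u v : V, ¬ (A u v ∧ A v u))
    (htrianglefree : ∀ c : DCycle A, c.verts.length ≠ 3)
    (u : V) (F₁ F₂ : Set (V × V))
    -- `F₁` is a feedback arc set of `D[I ∪ R]` where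
    -- `x ∈ I ∪ R ↔ A x u ∨ (x ≠ u ∧ ¬ A u x ∧ ¬ A x u)`
    (hF₁ : IsFAS (fun x y => A x y ∧
      (A x u ∨ (x ≠ u ∧ ¬ A u x ∧ ¬ A x u)) ∧
      (A y u ∨ (y ≠ u ∧ ¬ A u y ∧ ¬ A y u))) F₁)
    -- `F₂` is a feedback arc set of `D[O]`
    (hF₂ : IsFAS (fun x y => A x y ∧ A u x ∧ A u y) F₂) :
    IsFAS A (F₁ ∪ F₂ ∪
      {p : V × V | A p.1 p.2 ∧ A u p.1 ∧ p.2 ≠ u ∧ ¬ A u p.2 ∧ ¬ A p.2 u}) := by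
  set E : Set (V × V) :=
    {p : V × V | A p.1 p.2 ∧ A u p.1 ∧ p.2 ≠ u ∧ ¬ A u p.2 ∧ ¬ A p.2 u} with hE
  set F : Set (V × V) := F₁ ∪ F₂ ∪ E with hF
  -- key step lemma
  have step : ∀ v w : V, A v w → (v, w) ∉ F → A u v → A u w := by
    intro v w hvw hnF huv
    have hwu : w ≠ u := fun h => hsimple v u ⟨h ▸ hvw, huv⟩
    by_contra huw
    by_cases hwu' : A w u
    · -- triangle u v w
      have huvne : u ≠ v := by rintro rfl; exact hirr u huv
      have hvwne : v ≠ w := by rintro rfl; exact hirr v hvw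
      refine htrianglefree ⟨[u, v, w], by simp, by simp [huvne, hvwne, Ne.symm hwu], ?_⟩ rfl
      have : ([u, v, w] : List V).rotate 1 = [v, w, u] := by simp [List.rotate]
      rw [this]
      intro p hp
      have hp3 : p = (u, v) ∨ p = (v, w) ∨ p = (w, u) := by simpa using hp
      rcases hp3 with rfl | rfl | rfl
      · exact huv
      · exact hvw
      · exact hwu'
    · exact hnF (Or.inr ⟨hvw, huv, hwu, huw, hwu'⟩)
  constructor
  · rintro ⟨x, y⟩ hp
    rcases hp with (h | h) | h
    · exact (hF₁.1 _ h).1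
    · exact (hF₂.1 _ h).1
    · exact h.1
  · constructor
    intro c
    obtain ⟨l, hl2, hnd, harcs⟩ := c
    set n := l.length with hn
    have hn0 : 0 < n := by omega
    -- indexed arcs
    have harc : ∀ i (hi : i < n), A (l[i]'hi) (l[(i + 1) % n]'(Nat.mod_lt _ hn0)) ∧
        (l[i]'hi, l[(i + 1) % n]'(Nat.mod_lt _ hn0)) ∉ F := by
      intro i hi
      have hmem : (l[i]'hi, l[(i + 1) % n]'(Nat.mod_lt _ hn0)) ∈ l.zip (l.rotate 1) := by
        have hlen : i < (l.zip (l.rotate 1)).length := by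
          simp [List.length_zip]; omega
        have := List.getElem_mem hlen
        rwa [List.getElem_zip, List.getElem_rotate] at this
      exact harcs _ hmem
    -- membership gives successor
    have hsucc : ∀ v ∈ l, ∃ w ∈ l, A v w ∧ (v, w) ∉ F := by
      intro v hv
      obtain ⟨i, hi, rfl⟩ := List.mem_iff_getElem.mp hv
      exact ⟨l[(i + 1) % n]'(Nat.mod_lt _ hn0), List.getElem_mem _, harc i hi⟩
    by_cases hcase : ∃ v ∈ l, A u v
    · -- all vertices are out-neighbors of u
      have hall : ∀ v ∈ l, A u v := by
        obtain ⟨v0, hv0, huv0⟩ := hcase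
        obtain ⟨i₀, hi₀, rfl⟩ := List.mem_iff_getElem.mp hv0
        have key : ∀ k, A u (l[(i₀ + k) % n]'(Nat.mod_lt _ hn0)) := by
          intro k
          induction k with
          | zero =>
            have h0 : (i₀ + 0) % n = i₀ := by
              rw [Nat.add_zero]; exact Nat.mod_eq_of_lt hi₀
            simp only [h0]; exact huv0
          | succ k ih =>
            set j := (i₀ + k) % n with hj
            have hjn : j < n := Nat.mod_lt _ hn0
            have h1 : (j + 1) % n = (i₀ + (k + 1)) % n := by
              rw [hj, Nat.mod_add_mod, Nat.add_assoc]
            have hk := step _ _ (harc j hjn).1 (harc j hjn).2 ih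
            simp only [h1] at hk
            exact hk
        intro v hv
        obtain ⟨j, hjn, rfl⟩ := List.mem_iff_getElem.mp hv
        have heq : (i₀ + (j + n - i₀)) % n = j := by
          have h1 : i₀ + (j + n - i₀) = j + n := by omega
          rw [h1, Nat.add_mod_right, Nat.mod_eq_of_lt hjn]
        have hkey := key (j + n - i₀)
        simp only [heq] at hkey
        exact hkey
      -- build a cycle in D[O] avoiding F₂
      refine hF₂.2.false ⟨l, hl2, hnd, ?_⟩
      intro p hp
      have hm := List.of_mem_zip hp
      have h1 : p.1 ∈ l := hm.1
      have h2 : p.2 ∈ l := (List.mem_rotate).mp hm.2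
      have hA := harcs p hp
      refine ⟨⟨hA.1, hall _ h1, hall _ h2⟩, fun hmem => hA.2 (Or.inl (Or.inr hmem))⟩
    · -- no vertex is an out-neighbor of u
      push_neg at hcase
      have hne : ∀ v ∈ l, v ≠ u := by
        intro v hv h
        obtain ⟨w, hw, hvw, -⟩ := hsucc v hv
        exact hcase w hw (h ▸ hvw)
      refine hF₁.2.false ⟨l, hl2, hnd, ?_⟩
      intro p hp
      have hm := List.of_mem_zip hp
      have h1 : p.1 ∈ l := hm.1
      have h2 : p.2 ∈ l := (List.mem_rotate).mp hm.2
      have hA := harcs p hp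
      have side : ∀ v ∈ l, A v u ∨ (v ≠ u ∧ ¬ A u v ∧ ¬ A v u) := by
        intro v hv
        by_cases h : A v u
        · exact Or.inl h
        · exact Or.inr ⟨hne v hv, hcase v hv, h⟩
      exact ⟨⟨hA.1, side _ h1, side _ h2⟩, fun hmem => hA.2 (Or.inl (Or.inl hmem))⟩
end

section
/- Let T_σ be an ordered tournament partitioned into intervals, and let T'_σ be obtained from T_σ by reversing all back arcs whose endpoints lie in different intervals. Then every directed cycle of T'_σ is entirely contained within a single interval. -/
variable {V : Type*}

lemma cyc_step {α : Type*} (f : α → ℕ) (l : List α)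
    (h : ∀ p ∈ l.zip (l.rotate 1), f p.1 ≤ f p.2)
    (i : ℕ) (hi : i < l.length) :
    f (l[i]) ≤ f (l[(i+1) % l.length]'(Nat.mod_lt _ (by omega))) := by
  have hz : (l.zip (l.rotate 1)).length = l.length := by
    simp [List.length_zip]
  have hmem : (l.zip (l.rotate 1))[i]'(by omega) ∈ l.zip (l.rotate 1) :=
    List.getElem_mem _
  have hget : (l.zip (l.rotate 1))[i]'(by omega) =
      (l[i], (l.rotate 1)[i]'(by simpa using hi)) := List.getElem_zip
  have hrot : (l.rotate 1)[i]'(by simpa using hi) =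
      l[(i+1) % l.length]'(Nat.mod_lt _ (by omega)) := by
    rw [List.getElem_rotate]
  have := h _ hmem
  rw [hget, hrot] at this
  exact this

lemma cyc_const {α : Type*} (f : α → ℕ) (l : List α)
    (h : ∀ p ∈ l.zip (l.rotate 1), f p.1 ≤ f p.2)
    (i : ℕ) (hi : i < l.length) :
    f (l[i]) = f (l[0]'(by omega)) := by
  have hmono : ∀ j : ℕ, ∀ hj : j < l.length, f (l[0]'(by omega)) ≤ f l[j] := by
    intro j
    induction j with
    | zero => intro hj; exact le_refl _
    | succ k ih =>
      intro hj
      have hk : k < l.length := by omega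
      have := cyc_step f l h k hk
      have hmod : (k+1) % l.length = k+1 := Nat.mod_eq_of_lt hj
      simp only [hmod] at this
      exact le_trans (ih hk) this
  -- chain from j up to last
  have hup : ∀ j : ℕ, ∀ hj : j < l.length,
      f l[j] ≤ f (l[l.length - 1]'(by omega)) := by
    intro j hj
    have key : ∀ d : ℕ, ∀ j : ℕ, ∀ hj : j < l.length, l.length - 1 - j = d →
        f l[j] ≤ f (l[l.length - 1]'(by omega)) := by
      intro d
      induction d with
      | zero => intro j hj hd
                have : j = l.length - 1 := by omega
                subst this; exact le_refl _
      | succ k ih =>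
        intro j hj hd
        have hj1 : j + 1 < l.length := by omega
        have := cyc_step f l h j hj
        simp only [Nat.mod_eq_of_lt hj1] at this
        exact le_trans this (ih (j+1) hj1 (by omega))
    exact key _ j hj rfl
  have hwrap : f (l[l.length - 1]'(by omega)) ≤ f (l[0]'(by omega)) := by
    have := cyc_step f l h (l.length - 1) (by omega)
    have hmod : (l.length - 1 + 1) % l.length = 0 := by
      have : l.length - 1 + 1 = l.length := by omega
      rw [this, Nat.mod_self]
    simp only [hmod] at this
    exact this
  exact le_antisymm (le_trans (hup i hi) hwrap) (hmono i hi)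

/-- Let `T_σ` be an ordered tournament on `Fin n` whose vertex set is partitioned
into intervals (fibers of a monotone map `part`).  In the tournament `T'_σ`
obtained by reversing all back arcs with endpoints in different intervals, every
cycle is contained in a single interval. -/
theorem stmt15 {n : ℕ} (A : Fin n → Fin n → Prop) (hT : IsTournament A)
    (part : Fin n → ℕ) (hmono : Monotone part) :
    ∀ c : DCycle (fun u v : Fin n =>
        (A u v ∧ (part u = part v ∨ u < v)) ∨ (A v u ∧ part u ≠ part v ∧ u < v)),
      ∀ u ∈ c.verts, ∀ w ∈ c.verts, part u = part w := by
  intro c u hu w hw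
  set l := c.verts with hl
  have hle : ∀ p ∈ l.zip (l.rotate 1), part p.1 ≤ part p.2 := by
    intro p hp
    rcases c.arcs_rel p hp with ⟨_, heq | hlt⟩ | ⟨_, _, hlt⟩
    · exact le_of_eq heq
    · exact hmono (le_of_lt hlt)
    · exact hmono (le_of_lt hlt)
  have hpos : 0 < l.length := by
    have h2 : 2 ≤ l.length := c.two_le
    omega
  obtain ⟨i, hi, rfl⟩ := List.mem_iff_getElem.mp hu
  obtain ⟨j, hj, rfl⟩ := List.mem_iff_getElem.mp hw
  rw [cyc_const part l hle i hi, cyc_const part l hle j hj]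
end
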